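/- arXiv:1407.4113 — 2 statements merged into one kernel-verified Lean document; each statement's English description precedes it below -/
import Mathlib

section
/- Let C : Y × Y → ℤ be a ℤ-bilinear form. Then C satisfies C(e_i, e_j) + C(e_j, s_j(e_i)) = 0 for all indices i, j if and only if the quadratic form q(y) = C(y, y) is W-invariant, i.e. q(s_j(y)) = q(y) for all j and all y ∈ Y. -/
/-- `p : Fin n → Fin n → ℤ` is a generalized Cartan matrix. -/
def IsGCM {n : ℕ} (p : Fin n → Fin n → ℤ) : Prop :=
  (∀ i, p i i = 2) ∧ (∀ i j, i ≠ j → p i j ≤ 0) ∧ (∀ i j, i ≠ j → (p i j = 0 ↔ p j i = 0))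

/-- The simple reflection `s_j(y) = y − α_j(y)·e_j`, where `α_j(e_i) = p i j`. -/
def simpleRefl {n : ℕ} (p : Fin n → Fin n → ℤ) (j : Fin n) (y : Fin n → ℤ) : Fin n → ℤ :=
  y - (∑ i, y i * p i j) • Pi.single j 1

/-!
Write `α = α_j`, `e = e_j` and let `D(y) = C(y, e) + C(e, y) − α(y) C(e, e)`, a linear form in `y`.
The reflection condition for `(i, j)` says exactly `D(e_i) = 0`, while expanding
`s_j y = y − α(y) e` gives `q(s_j y) = q(y) − α(y) D(y)`. So both sides say that `D` vanishes:
the left side on a basis, the right side wherever `α` does not. Since `α(e) = 2 ≠ 0`, a product of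
linear forms `α · D` vanishing identically forces `D = 0`.
-/

theorem LinearMap.eq_zero_of_forall_mul_eq_zero {R M : Type*} [Semiring R] [NoZeroDivisors R]
    [AddCommMonoid M] [Module R M] {f g : M →ₗ[R] R} (hf : f ≠ 0) (hfg : ∀ y, f y * g y = 0) :
    g = 0 := by
  obtain ⟨y₀, hy₀⟩ : ∃ y₀, f y₀ ≠ 0 := by
    by_contra! h
    exact hf (LinearMap.ext h)
  have hg₀ : g y₀ = 0 := (mul_eq_zero.mp (hfg y₀)).resolve_left hy₀
  ext y
  rcases mul_eq_zero.mp (hfg y) with hy | hy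
  · -- `f (y + y₀) = f y₀ ≠ 0`, so `g` vanishes at `y + y₀` as well as at `y₀`.
    have hsum : g (y + y₀) = 0 :=
      (mul_eq_zero.mp (hfg (y + y₀))).resolve_left (by rwa [map_add, hy, zero_add])
    simpa [hg₀] using hsum
  · exact hy

section SimpleReflection

variable {n : ℕ} (p : Fin n → Fin n → ℤ) (C : (Fin n → ℤ) →ₗ[ℤ] (Fin n → ℤ) →ₗ[ℤ] ℤ) (j : Fin n)

def simpleRoot : (Fin n → ℤ) →ₗ[ℤ] ℤ where
  toFun y := ∑ i, y i * p i j
  map_add' y z := by simp only [Pi.add_apply, add_mul, Finset.sum_add_distrib]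
  map_smul' c y := by
    simp only [Pi.smul_apply, smul_eq_mul, mul_assoc, ← Finset.mul_sum, eq_intCast, Int.cast_id]

theorem simpleRefl_eq (y : Fin n → ℤ) : simpleRefl p j y = y - simpleRoot p j y • Pi.single j 1 :=
  rfl

@[simp]
theorem simpleRoot_single (i : Fin n) : simpleRoot p j (Pi.single i 1) = p i j := by
  simp [simpleRoot, Pi.single_apply]

theorem simpleRoot_ne_zero (hp : p j j ≠ 0) : simpleRoot p j ≠ 0 := fun h =>
  hp (by simpa [h] using (simpleRoot_single p j j).symm)

def reflectionDefect : (Fin n → ℤ) →ₗ[ℤ] ℤ :=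
  C.flip (Pi.single j 1) + C (Pi.single j 1) - C (Pi.single j 1) (Pi.single j 1) • simpleRoot p j

theorem reflectionDefect_apply (y : Fin n → ℤ) :
    reflectionDefect p C j y = C y (Pi.single j 1) + C (Pi.single j 1) y
      - simpleRoot p j y * C (Pi.single j 1) (Pi.single j 1) := by
  simp [reflectionDefect, mul_comm]

theorem reflection_condition_eq_reflectionDefect (i : Fin n) :
    C (Pi.single i 1) (Pi.single j 1) + C (Pi.single j 1) (simpleRefl p j (Pi.single i 1)) =
      reflectionDefect p C j (Pi.single i 1) := by
  rw [reflectionDefect_apply, simpleRefl_eq, simpleRoot_single, map_sub, map_smul, smul_eq_mul]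
  ring

theorem apply_simpleRefl_simpleRefl (y : Fin n → ℤ) :
    C (simpleRefl p j y) (simpleRefl p j y) =
      C y y - simpleRoot p j y * reflectionDefect p C j y := by
  rw [reflectionDefect_apply, simpleRefl_eq]
  simp only [map_sub, map_smul, LinearMap.sub_apply, LinearMap.smul_apply, smul_eq_mul]
  ring

theorem quadratic_simpleRefl_invariant_iff (hp : p j j ≠ 0) :
    (∀ y, C (simpleRefl p j y) (simpleRefl p j y) = C y y) ↔ reflectionDefect p C j = 0 := by
  simp_rw [apply_simpleRefl_simpleRefl, sub_eq_self]
  refine ⟨LinearMap.eq_zero_of_forall_mul_eq_zero (simpleRoot_ne_zero p j hp), fun h y => ?_⟩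
  rw [h, LinearMap.zero_apply, mul_zero]

end SimpleReflection

/-- A `ℤ`-bilinear form `C` on `Y = ℤⁿ` satisfies
`C(eᵢ, eⱼ) + C(eⱼ, sⱼ(eᵢ)) = 0` for all `i, j` iff the quadratic form `q(y) = C(y, y)` is
`W`-invariant, i.e. `q(sⱼ(y)) = q(y)` for all `j` and `y`. -/
theorem bilinear_reflection_condition_iff_quadratic_invariant {n : ℕ}
    (p : Fin n → Fin n → ℤ) (hp : IsGCM p)
    (C : (Fin n → ℤ) →ₗ[ℤ] (Fin n → ℤ) →ₗ[ℤ] ℤ) :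
    (∀ i j : Fin n,
        C (Pi.single i 1) (Pi.single j 1) + C (Pi.single j 1) (simpleRefl p j (Pi.single i 1))
          = 0) ↔
      (∀ (j : Fin n) (y : Fin n → ℤ), C (simpleRefl p j y) (simpleRefl p j y) = C y y) := by
  have hdiag : ∀ j, p j j ≠ 0 := fun j => by simp [hp.1 j]
  simp_rw [quadratic_simpleRefl_invariant_iff p C _ (hdiag _),
    reflection_condition_eq_reflectionDefect]
  rw [forall_comm]
  refine forall_congr' fun j => ⟨fun h => (Pi.basisFun ℤ (Fin n)).ext fun i => ?_, fun h i => ?_⟩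
  · simpa using h i
  · simp [h]
end

section
/- Let n ≥ 3 and let p be the Cartan matrix of type C_n ordered starting from the long root: p(i,i) = 2, p(1,2) = −1, p(2,1) = −2, p(i,i+1) = p(i+1,i) = −1 for 2 ≤ i ≤ n−1, and p(i,j) = 0 if |i − j| ≥ 2. Then every closed family d = (d_{ijk}) is exact. (This computes CH³(Sp_{2n}) = 0.) -/
/-- The index triples `(i, j, k)` with `i ≠ j`, `j ≠ k`, and (`i ≠ k` or `p i j ≠ 0`). -/
def ValidTriple {n : ℕ} (p : Fin n → Fin n → ℤ) (i j k : Fin n) : Prop :=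
  i ≠ j ∧ j ≠ k ∧ (i ≠ k ∨ p i j ≠ 0)

/-- A family `d = (dᵢⱼₖ)` of integers (indexed by valid triples) is closed if
`dᵢⱼₖ = dⱼᵢₖ` whenever `p i j = 0`, `dᵢⱼₖ = dᵢₖⱼ` whenever `p j k = 0`, and
`dᵢⱼᵢ = dⱼᵢⱼ` whenever `p i j = p j i = −1`. -/
def DClosed {n : ℕ} (p : Fin n → Fin n → ℤ) (d : Fin n → Fin n → Fin n → ℤ) : Prop :=
  (∀ i j k, ValidTriple p i j k → p i j = 0 → d i j k = d j i k) ∧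
  (∀ i j k, ValidTriple p i j k → p j k = 0 → d i j k = d i k j) ∧
  (∀ i j, i ≠ j → p i j = -1 → p j i = -1 → d i j i = d j i j)

/-- A family `d = (dᵢⱼₖ)` is exact if there are linear forms `φᵢⱼ : Y → ℤ` for `i ≠ j`, with
`φᵢᵢ = 0` and `φᵢⱼ = φⱼᵢ` whenever `p i j = 0`, such that
`dᵢⱼₖ = φᵢⱼ(eₖ) + φᵢₖ(eⱼ − p j k·eₖ) + φⱼₖ(eᵢ − p i j·eⱼ − p i k·eₖ + p j k·p i j·eₖ)`
for every valid triple. -/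
def DExact {n : ℕ} (p : Fin n → Fin n → ℤ) (d : Fin n → Fin n → Fin n → ℤ) : Prop :=
  ∃ φ : Fin n → Fin n → ((Fin n → ℤ) →ₗ[ℤ] ℤ),
    (∀ i, φ i i = 0) ∧
    (∀ i j, i ≠ j → p i j = 0 → φ i j = φ j i) ∧
    ∀ i j k, ValidTriple p i j k →
      d i j k = φ i j (Pi.single k 1)
        + φ i k (Pi.single j 1 - p j k • Pi.single k 1)
        + φ j k (Pi.single i 1 - p i j • Pi.single j 1 - p i k • Pi.single k 1
            + (p j k * p i j) • Pi.single k 1)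

/-- The Cartan matrix of type `Cₙ` ordered starting from the long root (indices `1, …, n` are
`0, …, n−1`): `p(1,2) = −1`, `p(2,1) = −2`, `p(i,i+1) = p(i+1,i) = −1` for `2 ≤ i ≤ n−1`, and
`p(i,j) = 0` if `|i − j| ≥ 2`. -/
def cartanC (n : ℕ) (i j : Fin n) : ℤ :=
  if i = j then 2
  else if (i : ℕ) = 0 ∧ (j : ℕ) = 1 then -1
  else if (i : ℕ) = 1 ∧ (j : ℕ) = 0 then -2
  else if (i : ℕ) + 1 = j ∨ (j : ℕ) + 1 = i then -1 else 0


/-!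
Write `x i j k` for `φᵢⱼ(eₖ)`, so that exactness asks for `d = δx` with `δ = coboundary p`. Both
`d` and `δx` are invariant under the two transpositions allowed by closedness, so `d = δx` only has
to be checked on one triple of each orbit: for `a < b < c` on one ordering if neither of the pairs
`(a, b)`, `(b, c)` is adjacent, on two if exactly one is, on four if both are, and besides on
`(a, a+1, a)` and `(a+1, a, a+1)`. The solution takes `x i j k = d i j k` when `k` is far from `i`
and `j` and corrects a few values next to the diagonal. In this normalisation the equations at the
orderings of `a, a+1, a+2` fix `φ_{a+1,a+2}(e_{a+1}) + φ_{a+1,a}(e_{a+1})`, while the one at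
`(a, a+1, a)` fixes `φ_{a,a+1}(e_a) + φ_{a+1,a}(e_{a+1})`; so `φ_{a,a+1}(e_a)` is a running sum,
started at the long root `0`, where `cartan 1 0 = -2` determines it.
-/

def coboundary {ι : Type*} (p : ι → ι → ℤ) (x : ι → ι → ι → ℤ) (i j k : ι) : ℤ :=
  x i j k + (x i k j - p j k * x i k k)
    + (x j k i - p i j * x j k j - p i k * x j k k + p j k * p i j * x j k k)

theorem coboundary_swap_left {ι : Type*} {p : ι → ι → ℤ} {x : ι → ι → ι → ℤ} {i j : ι}
    (hij : p i j = 0) (hji : p j i = 0) (hx : x i j = x j i) (k : ι) :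
    coboundary p x j i k = coboundary p x i j k := by
  simp only [coboundary, hij, hji, hx]
  ring

theorem coboundary_swap_right {ι : Type*} {p : ι → ι → ℤ} {x : ι → ι → ι → ℤ} {j k : ι}
    (hjk : p j k = 0) (hkj : p k j = 0) (hx : x j k = x k j) (i : ι) :
    coboundary p x i k j = coboundary p x i j k := by
  simp only [coboundary, hjk, hkj, hx]
  ring

theorem dExact_of_coboundary {n : ℕ} {p : Fin n → Fin n → ℤ} {d : Fin n → Fin n → Fin n → ℤ}
    (x : Fin n → Fin n → Fin n → ℤ) (hself : ∀ i, x i i = 0)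
    (hcomm : ∀ i j, i ≠ j → p i j = 0 → x i j = x j i)
    (hd : ∀ i j k, ValidTriple p i j k → d i j k = coboundary p x i j k) :
    DExact p d := by
  refine ⟨fun i j => Fintype.linearCombination ℤ (x i j), fun i => ?_, fun i j hij hp => ?_,
    fun i j k hv => ?_⟩
  · ext k
    simp [hself]
  · simp only [hcomm i j hij hp]
  · simp only [hd i j k hv, coboundary, map_add, map_sub, map_smul,
      Fintype.linearCombination_apply_single, smul_eq_mul, one_mul]

namespace TypeC

def cartan (a b : ℕ) : ℤ :=
  if a = b then 2
  else if a = 0 ∧ b = 1 then -1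
  else if a = 1 ∧ b = 0 then -2
  else if a + 1 = b ∨ b + 1 = a then -1 else 0

theorem cartanC_eq_cartan {n : ℕ} (i j : Fin n) : cartanC n i j = cartan i j := by
  simp [cartanC, cartan, Fin.ext_iff]

theorem cartan_self (a : ℕ) : cartan a a = 2 := by
  simp [cartan]

theorem cartan_of_eq_succ {a b : ℕ} (h : b = a + 1) : cartan a b = -1 := by
  unfold cartan; split_ifs <;> omega

theorem cartan_succ_of_ne_zero {a b : ℕ} (h : a = b + 1) (hb : b ≠ 0) : cartan a b = -1 := by
  unfold cartan; split_ifs <;> omega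

theorem cartan_one_zero : cartan 1 0 = -2 := rfl

theorem cartan_eq_zero_iff {a b : ℕ} : cartan a b = 0 ↔ a + 2 ≤ b ∨ b + 2 ≤ a := by
  unfold cartan; split_ifs <;> simp <;> omega

structure IsClosedFamily (d : ℕ → ℕ → ℕ → ℤ) : Prop where
  swap_left {i j k : ℕ} : j ≠ k → i ≠ k → cartan i j = 0 → d i j k = d j i k
  swap_right {i j k : ℕ} : i ≠ j → i ≠ k → cartan j k = 0 → d i j k = d i k j
  flip {a : ℕ} : a ≠ 0 → d a (a + 1) a = d (a + 1) a (a + 1)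

section Primitive

variable (d : ℕ → ℕ → ℕ → ℤ)

def diagSucc : ℕ → ℤ
  | 0 => d 1 0 1 - d 0 1 0
  | a + 1 => diagSucc a - d a (a + 1) a + d a (a + 1) (a + 2) - d a (a + 2) (a + 1)
      - d (a + 1) a (a + 2) + d (a + 2) (a + 1) a

def diagPred (a : ℕ) : ℤ := d a (a + 1) a - diagSucc d a

def gapTwo (a : ℕ) : ℤ := d (a + 1) a (a + 2) - d (a + 2) (a + 1) a + diagPred d a

/- `formSucc d a k`, `formPred d a k` and `formFar d a b k` are the values of `φ_{a,a+1}`,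
`φ_{a+1,a}` and `φ_{a,b} = φ_{b,a}` (for `a + 2 ≤ b`) on `e_k`. -/
def formSucc (a k : ℕ) : ℤ :=
  if k = a then diagSucc d a
  else if k = a + 2 then d a (a + 2) (a + 1)
  else if k = a + 1 ∨ k + 1 = a then 0
  else d a (a + 1) k

def formPred (a k : ℕ) : ℤ :=
  if k = a + 1 then diagPred d a
  else if k = a + 2 then d (a + 1) a (a + 2) - gapTwo d a
  else if k + 2 = a then d (a + 1) a k - gapTwo d k
  else if k = a ∨ k + 1 = a then 0
  else d (a + 1) a k

def formFar (a b k : ℕ) : ℤ :=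
  if b + 2 ≤ k then d a b k
  else if b = a + 2 ∧ k = b then gapTwo d a
  else 0

def primitive (i j k : ℕ) : ℤ :=
  if j = i + 1 then formSucc d i k
  else if i = j + 1 then formPred d j k
  else if i < j then formFar d i j k
  else if j < i then formFar d j i k
  else 0

theorem primitive_self (a k : ℕ) : primitive d a a k = 0 := by
  simp [primitive]

theorem primitive_comm {i j : ℕ} (h : i + 2 ≤ j ∨ j + 2 ≤ i) :
    primitive d i j = primitive d j i := by
  ext k
  unfold primitive
  split_ifs <;> first | rfl | omega

def CoboundaryAgrees (i j k : ℕ) : Prop :=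
  coboundary cartan (primitive d) i j k = d i j k

variable {d}

theorem CoboundaryAgrees.swap_left (hd : IsClosedFamily d) {i j k : ℕ} (hjk : j ≠ k) (hik : i ≠ k)
    (hij : i + 2 ≤ j ∨ j + 2 ≤ i) (h : CoboundaryAgrees d i j k) : CoboundaryAgrees d j i k := by
  have hp : cartan i j = 0 := cartan_eq_zero_iff.2 hij
  rw [CoboundaryAgrees, coboundary_swap_left hp (cartan_eq_zero_iff.2 (by omega))
    (primitive_comm d hij), h, hd.swap_left hjk hik hp]

theorem CoboundaryAgrees.swap_right (hd : IsClosedFamily d) {i j k : ℕ} (hij : i ≠ j) (hik : i ≠ k)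
    (hjk : j + 2 ≤ k ∨ k + 2 ≤ j) (h : CoboundaryAgrees d i j k) : CoboundaryAgrees d i k j := by
  have hp : cartan j k = 0 := cartan_eq_zero_iff.2 hjk
  rw [CoboundaryAgrees, coboundary_swap_right hp (cartan_eq_zero_iff.2 (by omega))
    (primitive_comm d hjk), h, hd.swap_right hij hik hp]

theorem coboundaryAgrees_far_far {a b c : ℕ} (hab : a + 2 ≤ b) (hbc : b + 2 ≤ c) :
    CoboundaryAgrees d a b c := by
  simp (disch := omega) only [CoboundaryAgrees, coboundary, primitive, formSucc, formPred, formFar,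
    if_pos, if_neg, if_true, true_or, and_true, cartan_eq_zero_iff.mpr]
  ring

theorem coboundaryAgrees_succ_far {a c : ℕ} (h : a + 3 ≤ c) :
    CoboundaryAgrees d a (a + 1) c ∧ CoboundaryAgrees d (a + 1) a c := by
  simp (disch := omega) only [CoboundaryAgrees, coboundary, primitive, formSucc, formPred, formFar,
    if_pos, if_neg, if_true, true_or, or_true, and_true, cartan_of_eq_succ, cartan_eq_zero_iff.mpr]
  constructor <;> ring

theorem coboundaryAgrees_far_succ (hd : IsClosedFamily d) {a b : ℕ} (h : a + 2 ≤ b) :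
    CoboundaryAgrees d a b (b + 1) ∧ CoboundaryAgrees d a (b + 1) b := by
  have h₁ : d a b (b + 1) = d b (b + 1) a := by
    rw [hd.swap_left (by omega) (by omega) (cartan_eq_zero_iff.2 (by omega)),
      hd.swap_right (by omega) (by omega) (cartan_eq_zero_iff.2 (by omega))]
  have h₂ : d a (b + 1) b = d (b + 1) b a := by
    rw [hd.swap_left (by omega) (by omega) (cartan_eq_zero_iff.2 (by omega)),
      hd.swap_right (by omega) (by omega) (cartan_eq_zero_iff.2 (by omega))]
  simp (disch := omega) only [CoboundaryAgrees, coboundary, primitive, formSucc, formPred, formFar,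
    if_pos, if_neg, if_true, true_or, or_true, and_true, cartan_of_eq_succ, cartan_succ_of_ne_zero,
    cartan_eq_zero_iff.mpr]
  constructor
  · omega
  · split_ifs <;> omega

theorem coboundaryAgrees_consecutive (a : ℕ) :
    CoboundaryAgrees d a (a + 1) (a + 2) ∧ CoboundaryAgrees d a (a + 2) (a + 1) ∧
      CoboundaryAgrees d (a + 1) a (a + 2) ∧ CoboundaryAgrees d (a + 2) (a + 1) a := by
  simp (disch := omega) only [CoboundaryAgrees, coboundary, primitive, formSucc, formPred, formFar,
    if_pos, if_neg, if_true, true_or, or_true, and_true, cartan_of_eq_succ, cartan_succ_of_ne_zero,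
    cartan_eq_zero_iff.mpr, gapTwo, diagPred, diagSucc]
  refine ⟨?_, ?_, ?_, ?_⟩ <;> ring

theorem coboundaryAgrees_succ_self (hd : IsClosedFamily d) (a : ℕ) :
    CoboundaryAgrees d a (a + 1) a ∧ CoboundaryAgrees d (a + 1) a (a + 1) := by
  simp (disch := omega) only [CoboundaryAgrees, coboundary, primitive, formSucc, formPred, formFar,
    if_pos, if_neg, if_true, true_or, or_true, cartan_of_eq_succ, cartan_self]
  refine ⟨by rw [diagPred]; ring, ?_⟩
  rcases eq_or_ne a 0 with rfl | ha
  · simp only [zero_add, cartan_one_zero, diagPred, diagSucc]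
    ring
  · rw [cartan_succ_of_ne_zero rfl ha, diagPred, ← hd.flip ha]
    ring

theorem coboundaryAgrees_of_lt (hd : IsClosedFamily d) {a b c : ℕ} (hab : a < b) (hbc : b < c) :
    CoboundaryAgrees d a b c ∧ CoboundaryAgrees d a c b ∧ CoboundaryAgrees d b a c ∧
      CoboundaryAgrees d b c a ∧ CoboundaryAgrees d c a b ∧ CoboundaryAgrees d c b a := by
  have hac : a + 2 ≤ c ∨ c + 2 ≤ a := by omega
  obtain hb | hab := (show b = a + 1 ∨ a + 2 ≤ b by omega) <;>
    obtain hc | hbc := (show c = b + 1 ∨ b + 2 ≤ c by omega)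
  · subst hc hb
    obtain ⟨habc, hacb, hbac, hcba⟩ := coboundaryAgrees_consecutive (d := d) a
    exact ⟨habc, hacb, hbac, hbac.swap_right hd (by omega) (by omega) hac,
      hacb.swap_left hd (by omega) (by omega) hac, hcba⟩
  · subst hb
    obtain ⟨habc, hbac⟩ := coboundaryAgrees_succ_far (d := d) (a := a) (c := c) (by omega)
    have hacb := habc.swap_right hd (by omega) (by omega) (by omega)
    have hbca := hbac.swap_right hd (by omega) (by omega) hac
    exact ⟨habc, hacb, hbac, hbca, hacb.swap_left hd (by omega) (by omega) hac,
      hbca.swap_left hd (by omega) (by omega) (by omega)⟩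
  · subst hc
    obtain ⟨habc, hacb⟩ := coboundaryAgrees_far_succ hd hab
    have hbac := habc.swap_left hd (by omega) (by omega) (by omega)
    have hcab := hacb.swap_left hd (by omega) (by omega) hac
    exact ⟨habc, hacb, hbac, hbac.swap_right hd (by omega) (by omega) hac, hcab,
      hcab.swap_right hd (by omega) (by omega) (by omega)⟩
  · have habc := coboundaryAgrees_far_far (d := d) hab hbc
    have hbac := habc.swap_left hd (by omega) (by omega) (by omega)
    have hacb := habc.swap_right hd (by omega) (by omega) (by omega)
    have hbca := hbac.swap_right hd (by omega) (by omega) hac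
    exact ⟨habc, hacb, hbac, hbca, hacb.swap_left hd (by omega) (by omega) hac,
      hbca.swap_left hd (by omega) (by omega) (by omega)⟩

theorem coboundaryAgrees_of_valid (hd : IsClosedFamily d) {i j k : ℕ} (hij : i ≠ j) (hjk : j ≠ k)
    (h : i ≠ k ∨ cartan i j ≠ 0) : CoboundaryAgrees d i j k := by
  rcases eq_or_ne i k with rfl | hik
  · have hadj : j = i + 1 ∨ i = j + 1 := by
      have := h.resolve_left (not_not.2 rfl)
      rw [Ne, cartan_eq_zero_iff] at this
      omega
    rcases hadj with rfl | rfl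
    · exact (coboundaryAgrees_succ_self hd i).1
    · exact (coboundaryAgrees_succ_self hd j).2
  rcases lt_or_gt_of_ne hij with h₁ | h₁ <;> rcases lt_or_gt_of_ne hjk with h₂ | h₂ <;>
    rcases lt_or_gt_of_ne hik with h₃ | h₃
  · exact (coboundaryAgrees_of_lt hd h₁ h₂).1
  · omega
  · exact (coboundaryAgrees_of_lt hd h₃ h₂).2.1
  · exact (coboundaryAgrees_of_lt hd h₃ h₁).2.2.2.1
  · exact (coboundaryAgrees_of_lt hd h₁ h₃).2.2.1
  · exact (coboundaryAgrees_of_lt hd h₂ h₃).2.2.2.2.1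
  · omega
  · exact (coboundaryAgrees_of_lt hd h₂ h₁).2.2.2.2.2

end Primitive

def extendNat {n : ℕ} (d : Fin n → Fin n → Fin n → ℤ) (a b c : ℕ) : ℤ :=
  if h : a < n ∧ b < n ∧ c < n then d ⟨a, h.1⟩ ⟨b, h.2.1⟩ ⟨c, h.2.2⟩ else 0

section Extend

variable {n : ℕ} {d : Fin n → Fin n → Fin n → ℤ}

theorem extendNat_coe (i j k : Fin n) : extendNat d i j k = d i j k := by
  simp [extendNat]

theorem extendNat_of_not_lt {a b c : ℕ} (h : ¬(a < n ∧ b < n ∧ c < n)) : extendNat d a b c = 0 :=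
  dif_neg h

theorem isClosedFamily_extendNat (hd : DClosed (cartanC n) d) : IsClosedFamily (extendNat d) := by
  obtain ⟨h₁, h₂, h₃⟩ := hd
  refine ⟨fun {i j k} hjk hik hp => ?_, fun {i j k} hij hik hp => ?_, fun {a} ha => ?_⟩
  · by_cases h : i < n ∧ j < n ∧ k < n
    · have hij : i ≠ j := by rw [cartan_eq_zero_iff] at hp; omega
      obtain ⟨hi, hj, hk⟩ := h
      lift i to Fin n using hi
      lift j to Fin n using hj
      lift k to Fin n using hk
      rw [← cartanC_eq_cartan] at hp
      rw [extendNat_coe, extendNat_coe]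
      exact h₁ i j k ⟨by omega, by omega, Or.inl (by omega)⟩ hp
    · rw [extendNat_of_not_lt h, extendNat_of_not_lt (by tauto)]
  · by_cases h : i < n ∧ j < n ∧ k < n
    · have hjk : j ≠ k := by rw [cartan_eq_zero_iff] at hp; omega
      obtain ⟨hi, hj, hk⟩ := h
      lift i to Fin n using hi
      lift j to Fin n using hj
      lift k to Fin n using hk
      rw [← cartanC_eq_cartan] at hp
      rw [extendNat_coe, extendNat_coe]
      exact h₂ i j k ⟨by omega, by omega, Or.inl (by omega)⟩ hp
    · rw [extendNat_of_not_lt h, extendNat_of_not_lt (by tauto)]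
  · by_cases h : a + 1 < n
    · have := h₃ ⟨a, by omega⟩ ⟨a + 1, h⟩ (by simp [Fin.ext_iff])
        (by rw [cartanC_eq_cartan]; exact cartan_of_eq_succ rfl)
        (by rw [cartanC_eq_cartan]; exact cartan_succ_of_ne_zero rfl ha)
      exact (extendNat_coe _ _ _).trans (this.trans (extendNat_coe _ _ _).symm)
    · rw [extendNat_of_not_lt (by omega), extendNat_of_not_lt (by omega)]

end Extend

end TypeC

open TypeC

theorem cn_closed_is_exact_general {n : ℕ} (d : Fin n → Fin n → Fin n → ℤ)
    (hd : DClosed (cartanC n) d) :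
    DExact (cartanC n) d := by
  refine dExact_of_coboundary (fun i j k => primitive (extendNat d) i j k)
    (fun i => funext fun k => primitive_self _ i k) (fun i j _ hp => ?_) (fun i j k hv => ?_)
  · rw [cartanC_eq_cartan, cartan_eq_zero_iff] at hp
    simp only [primitive_comm _ hp]
  · obtain ⟨hij, hjk, hv⟩ := hv
    have h := coboundaryAgrees_of_valid (isClosedFamily_extendNat hd) (i := i) (j := j) (k := k)
      (by omega) (by omega) (by rwa [cartanC_eq_cartan, ← Fin.val_ne_iff] at hv)
    rw [← extendNat_coe (d := d), ← h]
    simp only [coboundary, cartanC_eq_cartan]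

/-- For `n ≥ 3` and the Cartan matrix of type `Cₙ` ordered starting from the long
root, every closed family `d = (dᵢⱼₖ)` is exact. (This computes `CH³(Sp_{2n}) = 0`.) -/
theorem cn_closed_is_exact {n : ℕ} (hn : 3 ≤ n) (d : Fin n → Fin n → Fin n → ℤ)
    (hd : DClosed (cartanC n) d) :
    DExact (cartanC n) d :=
  cn_closed_is_exact_general d hd
end
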